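/- For every cycle C of π there exists an integer t ≤ ⌈log₂ n⌉ such that E_{t+1} ∩ C = {m}, where m is the minimum element of C, and E_{t+2} ∩ C = ∅; moreover |E_{r+1} ∩ C| ≤ |E_r ∩ C| / 2 for every r ≥ 1. -/

import Mathlib

attribute [local instance] Classical.propDecidable

variable {n : ℕ}

/-- The first element of `E` encountered strictly after `x` when following `π` along its cycle
(`x` itself if no element of `E` is reachable).  For `E = E_r` this is the map `π_r`. -/
noncomputable def nextIn (π : Equiv.Perm (Fin n)) (E : Finset (Fin n)) (x : Fin n) : Fin n :=
  if h : ∃ k, 0 < k ∧ (⇑π)^[k] x ∈ E then (⇑π)^[Nat.find h] x else x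

/-- `b`-fold iteration of `nextIn`; for `E = E_r` this is `π_r^b`. -/
noncomputable def stepB (π : Equiv.Perm (Fin n)) (b : ℕ) (E : Finset (Fin n)) (x : Fin n) :
    Fin n :=
  (nextIn π E)^[b] x

/-- `level π b r` is the set `E_{r+1}` (0-indexed): `level π b 0 = E_1 = [n]`, and `E_{r+1}`
consists of the elements `i` of `E_r` with `i < π_r^k(i)` for all `k ∈ {−b,…,b} \ {0}`. -/
noncomputable def level (π : Equiv.Perm (Fin n)) (b : ℕ) : ℕ → Finset (Fin n)
  | 0 => Finset.univ
  | r + 1 =>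
    (level π b r).filter fun i =>
      (∀ k ∈ Finset.Icc 1 b, i < (nextIn π (level π b r))^[k] i) ∧
      (∀ k ∈ Finset.Icc 1 b, i < (nextIn π⁻¹ (level π b r))^[k] i)

/-- The cycle of `π` containing `x`, as a finset. -/
def cycleOfF (π : Equiv.Perm (Fin n)) (x : Fin n) : Finset (Fin n) :=
  (Finset.range n).image fun k => (⇑π)^[k] x

/-!
On a cycle `C`, `π_r` walks cyclically through `E_r ∩ C` and `nextIn π⁻¹ E_r` walks back. An
element of `E_{r+1}` is a strict local minimum of this cyclic sequence, so `π_r` maps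
`E_{r+1} ∩ C` injectively into the elements of `E_r ∩ C` that are not local minima, which halves
the count at every level. The minimum `m` of `C` stays a local minimum as long as `E_r ∩ C` has
another element, so when the count first drops to at most one the level is `{m}`; then `m` is its
own successor and drops out. The halving makes this happen within `⌈log₂ n⌉` levels.
-/

open Equiv Function Finset

theorem mem_cycleOfF {π : Perm (Fin n)} {x y : Fin n} : y ∈ cycleOfF π x ↔ π.SameCycle x y := by
  simp only [cycleOfF, mem_image, mem_range]
  constructor
  · rintro ⟨k, -, rfl⟩
    exact ⟨k, by simp [Perm.iterate_eq_pow]⟩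
  · intro h
    obtain ⟨i, rfl⟩ := h.exists_nat_pow_eq
    have hpos := minimalPeriod_pos_of_mem_periodicPts (π.injective.mem_periodicPts x)
    refine ⟨i % minimalPeriod π x, ?_, iterate_mod_minimalPeriod_eq⟩
    calc i % minimalPeriod π x < minimalPeriod π x := Nat.mod_lt _ hpos
      _ ≤ n := minimalPeriod_le_card.trans_eq (Fintype.card_fin n)

section nextIn

variable {σ : Perm (Fin n)} {E : Finset (Fin n)} {y : Fin n}

theorem nextIn_eq_iterate {k : ℕ} (hk : 0 < k) (hkE : σ^[k] y ∈ E)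
    (hmin : ∀ j, 0 < j → j < k → σ^[j] y ∉ E) : nextIn σ E y = σ^[k] y := by
  have h : ∃ k, 0 < k ∧ σ^[k] y ∈ E := ⟨k, hk, hkE⟩
  have hfind : Nat.find h = k :=
    (Nat.find_eq_iff h).2 ⟨⟨hk, hkE⟩, fun j hj ⟨hj0, hjE⟩ => hmin j hj0 hj hjE⟩
  rw [nextIn, dif_pos h, hfind]

theorem exists_nextIn_eq_iterate (σ : Perm (Fin n)) (hy : y ∈ E) :
    ∃ k, 0 < k ∧ σ^[k] y ∈ E ∧ (∀ j, 0 < j → j < k → σ^[j] y ∉ E) ∧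
      nextIn σ E y = σ^[k] y := by
  have h : ∃ k, 0 < k ∧ σ^[k] y ∈ E :=
    ⟨minimalPeriod σ y, minimalPeriod_pos_of_mem_periodicPts (σ.injective.mem_periodicPts y),
      by rwa [iterate_minimalPeriod]⟩
  obtain ⟨hk, hkE⟩ := Nat.find_spec h
  have hmin : ∀ j, 0 < j → j < Nat.find h → σ^[j] y ∉ E :=
    fun j hj0 hj hjE => Nat.find_min h hj ⟨hj0, hjE⟩
  exact ⟨Nat.find h, hk, hkE, hmin, nextIn_eq_iterate hk hkE hmin⟩

theorem nextIn_mem (hy : y ∈ E) : nextIn σ E y ∈ E := by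
  obtain ⟨k, -, hkE, -, hk⟩ := exists_nextIn_eq_iterate σ hy
  exact hk ▸ hkE

theorem sameCycle_nextIn (σ : Perm (Fin n)) (E : Finset (Fin n)) (y : Fin n) :
    σ.SameCycle y (nextIn σ E y) := by
  unfold nextIn
  split
  · exact Perm.sameCycle_pow_right.2 (Perm.SameCycle.refl σ y)
  · exact Perm.SameCycle.refl σ y

theorem nextIn_inv_nextIn (hy : y ∈ E) : nextIn σ⁻¹ E (nextIn σ E y) = y := by
  obtain ⟨k, hk, hkE, hmin, hnext⟩ := exists_nextIn_eq_iterate σ hy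
  have hback : ∀ j ≤ k, (⇑σ⁻¹)^[j] (σ^[k] y) = σ^[k - j] y := by
    intro j hj
    rw [show k = j + (k - j) by omega, iterate_add_apply, Nat.add_sub_cancel_left]
    exact (LeftInverse.iterate σ.symm_apply_apply j) _
  have hback_k : (⇑σ⁻¹)^[k] (σ^[k] y) = y := by rw [hback k le_rfl, Nat.sub_self, iterate_zero_apply]
  rw [hnext, nextIn_eq_iterate hk (by rwa [hback_k]), hback_k]
  intro j hj0 hjk
  rw [hback j hjk.le]
  exact hmin (k - j) (by omega) (by omega)

theorem eq_of_nextIn_eq_self {z : Fin n} (hyE : y ∈ E) (hfix : nextIn σ E y = y) (hzE : z ∈ E)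
    (hyz : σ.SameCycle y z) : z = y := by
  obtain ⟨k, hk, -, hmin, hnext⟩ := exists_nextIn_eq_iterate σ hyE
  have hper : IsPeriodicPt σ k y := by rw [IsPeriodicPt, IsFixedPt, ← hnext, hfix]
  obtain ⟨i, rfl⟩ := hyz.exists_nat_pow_eq
  rw [← Perm.iterate_eq_pow, ← hper.iterate_mod_apply] at hzE ⊢
  by_contra hne
  have hpos : 0 < i % k := Nat.pos_of_ne_zero fun h0 => hne (by rw [h0, iterate_zero_apply])
  exact hmin _ hpos (Nat.mod_lt i hk) hzE

end nextIn

theorem injOn_nextIn (σ : Perm (Fin n)) (E : Finset (Fin n)) : Set.InjOn (nextIn σ E) E :=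
  fun a ha b hb hab => by
    simpa only [nextIn_inv_nextIn ha, nextIn_inv_nextIn hb] using congrArg (nextIn σ⁻¹ E) hab

section level

variable {π : Perm (Fin n)} {x m : Fin n} {r : ℕ}

theorem nextIn_mem_cycleOfF (E : Finset (Fin n)) {y : Fin n} (hy : y ∈ cycleOfF π x) :
    nextIn π E y ∈ cycleOfF π x :=
  mem_cycleOfF.2 ((mem_cycleOfF.1 hy).trans (sameCycle_nextIn π E y))

theorem nextIn_inv_mem_cycleOfF (E : Finset (Fin n)) {y : Fin n} (hy : y ∈ cycleOfF π x) :
    nextIn π⁻¹ E y ∈ cycleOfF π x :=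
  mem_cycleOfF.2 ((mem_cycleOfF.1 hy).trans (Perm.sameCycle_inv.1 (sameCycle_nextIn π⁻¹ E y)))

theorem mem_level_succ_iff {i : Fin n} :
    i ∈ level π 1 (r + 1) ↔
      i ∈ level π 1 r ∧ i < nextIn π (level π 1 r) i ∧ i < nextIn π⁻¹ (level π 1 r) i := by
  simp [level]

theorem level_succ_subset : level π 1 (r + 1) ⊆ level π 1 r :=
  fun _ hi => (mem_level_succ_iff.1 hi).1

theorem two_mul_card_level_succ_inter_le (r : ℕ) :
    2 * (level π 1 (r + 1) ∩ cycleOfF π x).card ≤ (level π 1 r ∩ cycleOfF π x).card := by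
  set E := level π 1 r
  set A := level π 1 (r + 1) ∩ cycleOfF π x
  set B := E ∩ cycleOfF π x
  have hAB : A ⊆ B := inter_subset_inter_right level_succ_subset
  have hmaps : Set.MapsTo (nextIn π E) A ↑(B \ A) := by
    intro i hi
    obtain ⟨hi, hiC⟩ := mem_inter.1 hi
    obtain ⟨hiE, hlt, -⟩ := mem_level_succ_iff.1 hi
    refine mem_sdiff.2 ⟨mem_inter.2 ⟨nextIn_mem hiE, nextIn_mem_cycleOfF E hiC⟩, fun hA => ?_⟩
    have hgt := (mem_level_succ_iff.1 (mem_inter.1 hA).1).2.2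
    rw [nextIn_inv_nextIn hiE] at hgt
    exact lt_asymm hlt hgt
  have hinj : Set.InjOn (nextIn π E) A :=
    (injOn_nextIn π E).mono fun _ hi => level_succ_subset (mem_inter.1 hi).1
  have hcard := card_le_card_of_injOn _ hmaps hinj
  rw [card_sdiff_of_subset hAB] at hcard
  have := card_le_card hAB
  omega

theorem mem_level_succ_of_forall_le (hm : ∀ y ∈ cycleOfF π x, m ≤ y) (hmE : m ∈ level π 1 r)
    (hmC : m ∈ cycleOfF π x) {z : Fin n} (hzE : z ∈ level π 1 r) (hzC : z ∈ cycleOfF π x)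
    (hzm : z ≠ m) : m ∈ level π 1 (r + 1) := by
  have hmz : π.SameCycle m z := (mem_cycleOfF.1 hmC).symm.trans (mem_cycleOfF.1 hzC)
  refine mem_level_succ_iff.2 ⟨hmE, (hm _ (nextIn_mem_cycleOfF _ hmC)).lt_of_ne' ?_,
    (hm _ (nextIn_inv_mem_cycleOfF _ hmC)).lt_of_ne' ?_⟩
  · exact fun hfix => hzm (eq_of_nextIn_eq_self hmE hfix hzE hmz)
  · exact fun hfix => hzm (eq_of_nextIn_eq_self hmE hfix hzE (Perm.sameCycle_inv.2 hmz))

theorem mem_level_of_forall_le (hm : ∀ y ∈ cycleOfF π x, m ≤ y) (hmC : m ∈ cycleOfF π x)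
    {t : ℕ} (hbig : ∀ s < t, 1 < (level π 1 s ∩ cycleOfF π x).card) : m ∈ level π 1 t := by
  induction t with
  | zero => exact mem_univ m
  | succ t ih =>
    obtain ⟨z, hz, hzm⟩ := exists_mem_ne (hbig t t.lt_succ_self) m
    exact mem_level_succ_of_forall_le hm (ih fun s hs => hbig s (by omega)) hmC
      (mem_inter.1 hz).1 (mem_inter.1 hz).2 hzm

theorem level_succ_inter_eq_empty (h : level π 1 r ∩ cycleOfF π x = {m}) :
    level π 1 (r + 1) ∩ cycleOfF π x = ∅ := by
  have hsub : ∀ {y}, y ∈ level π 1 r → y ∈ cycleOfF π x → y = m :=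
    fun hy hyC => mem_singleton.1 (h ▸ mem_inter.2 ⟨hy, hyC⟩)
  refine eq_empty_of_forall_notMem fun y hy => ?_
  obtain ⟨hy, hyC⟩ := mem_inter.1 hy
  obtain ⟨hyE, hlt, -⟩ := mem_level_succ_iff.1 hy
  exact hlt.ne' ((hsub (nextIn_mem hyE) (nextIn_mem_cycleOfF _ hyC)).trans (hsub hyE hyC).symm)

theorem two_pow_mul_card_level_inter_le (r : ℕ) :
    2 ^ r * (level π 1 r ∩ cycleOfF π x).card ≤ n := by
  induction r with
  | zero => simpa [level] using card_le_univ (cycleOfF π x)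
  | succ r ih =>
    calc 2 ^ (r + 1) * (level π 1 (r + 1) ∩ cycleOfF π x).card
        = 2 ^ r * (2 * (level π 1 (r + 1) ∩ cycleOfF π x).card) := by ring
      _ ≤ 2 ^ r * (level π 1 r ∩ cycleOfF π x).card :=
        Nat.mul_le_mul_left _ (two_mul_card_level_succ_inter_le r)
      _ ≤ n := ih

theorem succ_le_clog_of_one_lt_card (h : 1 < (level π 1 r ∩ cycleOfF π x).card) :
    r + 1 ≤ Nat.clog 2 n := by
  have hpow : 2 ^ (r + 1) ≤ n :=
    calc 2 ^ (r + 1) = 2 ^ r * 2 := pow_succ 2 r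
      _ ≤ 2 ^ r * (level π 1 r ∩ cycleOfF π x).card := Nat.mul_le_mul_left _ h
      _ ≤ n := two_pow_mul_card_level_inter_le r
  exact (Nat.le_log_of_pow_le one_lt_two hpow).trans (Nat.log_le_clog 2 n)

theorem exists_card_level_inter_le_one (π : Perm (Fin n)) (x : Fin n) :
    ∃ r, (level π 1 r ∩ cycleOfF π x).card ≤ 1 := by
  refine ⟨n, ?_⟩
  have := two_pow_mul_card_level_inter_le (π := π) (x := x) n
  have := n.lt_two_pow_self
  nlinarith

end level

/-- (Fich et al., `b = 1`: `E_{r+1} = {i ∈ E_r : π_r^{−1}(i) > i < π_r(i)}`,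
here `E_r = level π 1 (r-1)`, 0-indexed.)  For every cycle `C` of `π` there exists
`t ≤ ⌈log₂ n⌉` such that `E_{t+1} ∩ C = {m}`, where `m` is the minimum element of `C`, and
`E_{t+2} ∩ C = ∅`; moreover `|E_{r+1} ∩ C| ≤ |E_r ∩ C| / 2` for every `r ≥ 1`. -/
theorem levels_halve_and_reach_min (n : ℕ) (π : Equiv.Perm (Fin n)) (x : Fin n)
    (C : Finset (Fin n)) (hC : C = cycleOfF π x)
    (m : Fin n) (hmC : m ∈ C) (hm : ∀ y ∈ C, m ≤ y) :
    (∃ t ≤ Nat.clog 2 n,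
      (level π 1 t) ∩ C = {m} ∧ (level π 1 (t + 1)) ∩ C = ∅) ∧
    ∀ r : ℕ, 2 * ((level π 1 (r + 1)) ∩ C).card ≤ ((level π 1 r) ∩ C).card := by
  subst hC
  refine ⟨?_, two_mul_card_level_succ_inter_le⟩
  have hex := exists_card_level_inter_le_one π x
  have hbig : ∀ s < Nat.find hex, 1 < (level π 1 s ∩ cycleOfF π x).card :=
    fun s hs => not_le.1 (Nat.find_min hex hs)
  have hmt : m ∈ level π 1 (Nat.find hex) ∩ cycleOfF π x :=
    mem_inter.2 ⟨mem_level_of_forall_le hm hmC hbig, hmC⟩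
  have hsing : level π 1 (Nat.find hex) ∩ cycleOfF π x = {m} :=
    eq_singleton_iff_unique_mem.2 ⟨hmt, fun y hy => card_le_one.1 (Nat.find_spec hex) y hy m hmt⟩
  refine ⟨Nat.find hex, ?_, hsing, level_succ_inter_eq_empty hsing⟩
  cases ht : Nat.find hex with
  | zero => exact Nat.zero_le _
  | succ s => exact succ_le_clog_of_one_lt_card (hbig s (by omega))
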